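/- For every positive integer d, the VC dimension of the class of all d-dimensional ellipsoids in ℝ^d is at least (d² + 3d)/2; equivalently, there exists a set of (d² + 3d)/2 points in ℝ^d (in fact on the unit sphere S^{d−1}) that is shattered by the class of d-dimensional ellipsoids. -/

import Mathlib

open Matrix

/-- A class `C` of subsets of `α` shatters a set `X` if every subset of `X`
is cut out of `X` by some member of `C`. -/
def Shatters {α : Type*} (C : Set (Set α)) (X : Set α) : Prop :=
  ∀ Y ⊆ X, ∃ B ∈ C, Y = X ∩ B

/-- The VC dimension of a class `C` of subsets: the supremum (in `ℕ∞`) of the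
cardinalities of finite sets shattered by `C`. -/
noncomputable def vcDim {α : Type*} (C : Set (Set α)) : ℕ∞ :=
  ⨆ (X : Finset α) (_ : Shatters C (X : Set α)), (X.card : ℕ∞)

/-- A `d`-dimensional ellipsoid: `{x ∈ ℝ^d : (x-μ)ᵀ A (x-μ) < 1}` for a center
`μ ∈ ℝ^d` and a (symmetric) positive definite matrix `A`. -/
def IsEllipsoid {d : ℕ} (E : Set (Fin d → ℝ)) : Prop :=
  ∃ (μ : Fin d → ℝ) (A : Matrix (Fin d) (Fin d) ℝ), A.PosDef ∧
    E = {x | (x - μ) ⬝ᵥ A.mulVec (x - μ) < 1}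

/-! The `2d + d(d - 1)/2` points `±eᵢ` and `(eᵢ + eⱼ)/√2` (`i < j`) lie on the unit sphere, and
arbitrary values on them are interpolated by a quadratic `x ↦ xᵀAx + b·x` with `A` symmetric. So every subset `Y`
of these points is the set where some such quadratic is negative. On the sphere one may add
`t (|x|² - 1)` without changing the quadratic; for large `t` its quadratic part becomes positive
definite, and completing the square turns `{xᵀAx + b·x < 0}` into an ellipsoid. -/

lemma abs_mul_le_dotProduct_self {ι : Type*} [Fintype ι] (x : ι → ℝ) (i j : ι) :
    |x i * x j| ≤ x ⬝ᵥ x := by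
  have hle : ∀ k, x k * x k ≤ x ⬝ᵥ x := fun k =>
    Finset.single_le_sum (f := fun k => x k * x k) (fun k _ => mul_self_nonneg _)
      (Finset.mem_univ k)
  rw [abs_mul]
  nlinarith [two_mul_le_add_sq |x i| |x j|, abs_mul_abs_self (x i), abs_mul_abs_self (x j),
    hle i, hle j]

namespace Matrix

variable {ι : Type*} [Fintype ι]

lemma abs_dotProduct_mulVec_self_le (A : Matrix ι ι ℝ) (x : ι → ℝ) :
    |x ⬝ᵥ A *ᵥ x| ≤ (∑ i, ∑ j, |A i j|) * (x ⬝ᵥ x) := by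
  have hexpand : x ⬝ᵥ A *ᵥ x = ∑ i, ∑ j, A i j * (x i * x j) := by
    simp only [dotProduct, mulVec, Finset.mul_sum]
    exact Finset.sum_congr rfl fun i _ => Finset.sum_congr rfl fun j _ => by ring
  calc |x ⬝ᵥ A *ᵥ x| ≤ ∑ i, ∑ j, |A i j * (x i * x j)| := by
        rw [hexpand]
        exact (Finset.abs_sum_le_sum_abs _ _).trans
          (Finset.sum_le_sum fun i _ => Finset.abs_sum_le_sum_abs _ _)
    _ ≤ ∑ i, ∑ j, |A i j| * (x ⬝ᵥ x) := by
        gcongr with i _ j _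
        rw [abs_mul]
        exact mul_le_mul_of_nonneg_left (abs_mul_le_dotProduct_self x i j) (abs_nonneg _)
    _ = (∑ i, ∑ j, |A i j|) * (x ⬝ᵥ x) := by simp only [Finset.sum_mul]

lemma posDef_add_smul_one [DecidableEq ι] {A : Matrix ι ι ℝ} (hA : A.IsSymm) {t : ℝ}
    (ht : ∑ i, ∑ j, |A i j| < t) : (A + t • 1).PosDef := by
  refine .of_dotProduct_mulVec_pos (isHermitian_iff_isSymm.2 (hA.add (isSymm_one.smul t)))
    fun x hx => ?_
  have hxx : 0 < x ⬝ᵥ x := dotProduct_self_star_pos_iff.2 hx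
  rw [star_trivial, add_mulVec, dotProduct_add, smul_mulVec, one_mulVec, dotProduct_smul,
    smul_eq_mul]
  nlinarith [neg_abs_le (x ⬝ᵥ A *ᵥ x), abs_dotProduct_mulVec_self_le A x]

lemma dotProduct_mulVec_sub_sub {A : Matrix ι ι ℝ} (hA : A.IsSymm) (x μ : ι → ℝ) :
    (x - μ) ⬝ᵥ A *ᵥ (x - μ) = x ⬝ᵥ A *ᵥ x - 2 * (A *ᵥ μ ⬝ᵥ x) + μ ⬝ᵥ A *ᵥ μ := by
  have hswap : μ ⬝ᵥ A *ᵥ x = A *ᵥ μ ⬝ᵥ x := by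
    rw [dotProduct_mulVec, ← vecMul_transpose, hA.eq]
  rw [sub_dotProduct, mulVec_sub, dotProduct_sub, dotProduct_sub, hswap,
    dotProduct_comm x (A *ᵥ μ)]
  ring

lemma single_dotProduct_mulVec_single [DecidableEq ι] (A : Matrix ι ι ℝ) (i j : ι) (a b : ℝ) :
    Pi.single i a ⬝ᵥ A *ᵥ Pi.single j b = a * A i j * b := by
  rw [mulVec_single, single_dotProduct, mul_assoc]
  rfl

end Matrix

theorem exists_isEllipsoid_inter_sphere {d : ℕ} {A : Matrix (Fin d) (Fin d) ℝ} (hA : A.IsSymm)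
    (b : Fin d → ℝ) :
    ∃ E, IsEllipsoid E ∧ ∀ x : Fin d → ℝ, ∑ i, x i ^ 2 = 1 →
      (x ∈ E ↔ x ⬝ᵥ A *ᵥ x + b ⬝ᵥ x < 0) := by
  set t := ∑ i, ∑ j, |A i j| + 1
  obtain ⟨M, hMA⟩ : ∃ M, A + t • 1 = M := ⟨_, rfl⟩
  have hM : M.PosDef := hMA ▸ posDef_add_smul_one hA (lt_add_one _)
  set μ := (-(1 / 2) : ℝ) • M⁻¹ *ᵥ b
  have hMμ : M *ᵥ μ = (-(1 / 2) : ℝ) • b := by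
    rw [mulVec_smul, mulVec_mulVec, mul_nonsing_inv _ (isUnit_iff_isUnit_det M |>.1 hM.isUnit),
      one_mulVec]
  set k := μ ⬝ᵥ M *ᵥ μ + t
  have hk : 0 < k := add_pos_of_nonneg_of_pos
    (by simpa using hM.posSemidef.dotProduct_mulVec_nonneg μ) (by positivity)
  have hsquare : ∀ x : Fin d → ℝ, ∑ i, x i ^ 2 = 1 →
      (x - μ) ⬝ᵥ M *ᵥ (x - μ) = x ⬝ᵥ A *ᵥ x + b ⬝ᵥ x + k := by
    intro x hx
    have hxx : x ⬝ᵥ x = 1 := by simpa [dotProduct, sq] using hx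
    have hMx : x ⬝ᵥ M *ᵥ x = x ⬝ᵥ A *ᵥ x + t := by
      rw [← hMA, add_mulVec, dotProduct_add, smul_mulVec, one_mulVec, dotProduct_smul, hxx,
        smul_eq_mul, mul_one]
    have hcross : M *ᵥ μ ⬝ᵥ x = -(1 / 2) * (b ⬝ᵥ x) := by
      rw [hMμ, smul_dotProduct, smul_eq_mul]
    rw [dotProduct_mulVec_sub_sub (isHermitian_iff_isSymm.1 hM.isHermitian), hMx, hcross]
    ring
  refine ⟨_, ⟨μ, k⁻¹ • M, hM.smul (inv_pos.2 hk), rfl⟩, fun x hx => ?_⟩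
  rw [Set.mem_ofPred_eq, smul_mulVec, dotProduct_smul, smul_eq_mul, hsquare x hx,
    inv_mul_lt_one₀ hk, add_lt_iff_neg_right]

theorem shatters_ellipsoids_of_forall_exists_interpolating {d : ℕ} {S : Set (Fin d → ℝ)}
    (hS : ∀ x ∈ S, ∑ i, x i ^ 2 = 1)
    (hinterp : ∀ f : (Fin d → ℝ) → ℝ, ∃ A : Matrix (Fin d) (Fin d) ℝ, A.IsSymm ∧
      ∃ b : Fin d → ℝ, ∀ x ∈ S, x ⬝ᵥ A *ᵥ x + b ⬝ᵥ x = f x) :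
    Shatters {E | IsEllipsoid E} S := by
  classical
  intro Y hY
  obtain ⟨A, hA, b, hq⟩ := hinterp fun x => if x ∈ Y then -1 else 1
  obtain ⟨E, hE, hmem⟩ := exists_isEllipsoid_inter_sphere hA b
  refine ⟨E, hE, Set.ext fun x => ⟨fun hx => ⟨hY hx, ?_⟩, fun ⟨hxS, hxE⟩ => ?_⟩⟩
  · rw [hmem x (hS x (hY hx)), hq x (hY hx), if_pos hx]
    norm_num
  · rw [hmem x (hS x hxS), hq x hxS] at hxE
    by_contra hxY
    rw [if_neg hxY] at hxE
    norm_num at hxE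

section SpherePoint

variable {d : ℕ}

noncomputable def spherePoint : Fin d ⊕ Fin d ⊕ {z : Sym2 (Fin d) // ¬z.IsDiag} → Fin d → ℝ
  | .inl i => Pi.single i 1
  | .inr (.inl i) => Pi.single i (-1)
  | .inr (.inr z) =>
      Sym2.lift ⟨fun i j => Pi.single i (√2)⁻¹ + Pi.single j (√2)⁻¹, fun _ _ => add_comm _ _⟩ z

lemma sum_sq_spherePoint (a : Fin d ⊕ Fin d ⊕ {z : Sym2 (Fin d) // ¬z.IsDiag}) :
    ∑ k, spherePoint a k ^ 2 = 1 := by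
  rcases a with i | i | ⟨z, hz⟩
  · simp [spherePoint, Pi.single_apply]
  · simp [spherePoint, Pi.single_apply]
  · induction z using Sym2.ind with
    | h i j =>
      have hij : i ≠ j := Sym2.mk_isDiag_iff.not.1 hz
      norm_num [spherePoint, Pi.single_apply, add_sq, Finset.sum_add_distrib, hij.symm]

/- The quadratic takes the values `Aᵢᵢ ± bᵢ` at `±eᵢ` and
`(Aᵢᵢ + Aⱼⱼ)/2 + Aᵢⱼ + (bᵢ + bⱼ)/√2` at `(eᵢ + eⱼ)/√2`; these equations are solved successively
for `b`, the diagonal of `A`, and its off-diagonal entries. -/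
theorem exists_isSymm_interpolating_spherePoint
    (g : Fin d ⊕ Fin d ⊕ {z : Sym2 (Fin d) // ¬z.IsDiag} → ℝ) :
    ∃ A : Matrix (Fin d) (Fin d) ℝ, A.IsSymm ∧ ∃ b : Fin d → ℝ,
      ∀ a, spherePoint a ⬝ᵥ A *ᵥ spherePoint a + b ⬝ᵥ spherePoint a = g a := by
  classical
  let b : Fin d → ℝ := fun i => (g (.inl i) - g (.inr (.inl i))) / 2
  let c : Fin d → ℝ := fun i => (g (.inl i) + g (.inr (.inl i))) / 2
  let G : Sym2 (Fin d) → ℝ := fun z => if hz : z.IsDiag then 0 else g (.inr (.inr ⟨z, hz⟩))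
  let A : Matrix (Fin d) (Fin d) ℝ := Matrix.of fun i j =>
    if i = j then c i else G s(i, j) - (c i + c j) / 2 - (√2)⁻¹ * (b i + b j)
  have hAdiag : ∀ i, A i i = c i := fun i => if_pos rfl
  have hAoff : ∀ {i j}, i ≠ j → A i j = G s(i, j) - (c i + c j) / 2 - (√2)⁻¹ * (b i + b j) :=
    fun h => if_neg h
  have hA : A.IsSymm := by
    ext i j
    rcases eq_or_ne i j with rfl | hij
    · rfl
    · rw [transpose_apply, hAoff hij, hAoff hij.symm, Sym2.eq_swap]
      ring
  refine ⟨A, hA, b, ?_⟩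
  rintro (i | i | ⟨z, hz⟩)
  · rw [spherePoint, single_dotProduct_mulVec_single, dotProduct_single, hAdiag]
    ring
  · rw [spherePoint, single_dotProduct_mulVec_single, dotProduct_single, hAdiag]
    ring
  · induction z using Sym2.ind with
    | h i j =>
      have hij : i ≠ j := Sym2.mk_isDiag_iff.not.1 hz
      have hG : G s(i, j) = g (.inr (.inr ⟨s(i, j), hz⟩)) := dif_neg hz
      rw [spherePoint, Sym2.lift_mk]
      simp only [mulVec_add, dotProduct_add, add_dotProduct, single_dotProduct_mulVec_single,
        dotProduct_single, hAdiag, hAoff hij, hAoff hij.symm, Sym2.eq_swap (a := j)]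
      linear_combination (2 * G s(i, j) - 2 * (√2)⁻¹ * (b i + b j)) *
        TsirelsonInequality.sqrt_two_inv_mul_self + hG

theorem spherePoint_injective : Function.Injective (spherePoint (d := d)) := by
  classical
  intro a a' h
  obtain ⟨A, -, b, hq⟩ :=
    exists_isSymm_interpolating_spherePoint fun a'' => if a'' = a then (1 : ℝ) else 0
  have hval := hq a
  rw [h, hq a'] at hval
  simpa [eq_comm] using hval

theorem shatters_ellipsoids_range_spherePoint :
    Shatters {E | IsEllipsoid E} (Set.range (spherePoint (d := d))) := by
  refine shatters_ellipsoids_of_forall_exists_interpolating ?_ fun f => ?_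
  · rintro _ ⟨a, rfl⟩
    exact sum_sq_spherePoint a
  · obtain ⟨A, hA, b, hq⟩ := exists_isSymm_interpolating_spherePoint (f ∘ spherePoint)
    exact ⟨A, hA, b, by rintro _ ⟨a, rfl⟩; exact hq a⟩

lemma card_sum_sum_subtype_not_isDiag :
    Fintype.card (Fin d ⊕ Fin d ⊕ {z : Sym2 (Fin d) // ¬z.IsDiag}) = (d ^ 2 + 3 * d) / 2 := by
  rw [Fintype.card_sum, Fintype.card_sum, Sym2.card_subtype_not_diag, Fintype.card_fin,
    Nat.choose_two_right]
  have h : d ^ 2 + 3 * d = d * (d - 1) + 2 * (2 * d) := by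
    rcases d with _ | d
    · rfl
    · rw [Nat.add_sub_cancel]
      ring
  rw [h, Nat.add_mul_div_left _ _ two_pos]
  omega

end SpherePoint

theorem le_vcDim_of_shatters {α : Type*} {C : Set (Set α)} {X : Finset α}
    (h : Shatters C (X : Set α)) : (X.card : ℕ∞) ≤ vcDim C :=
  le_iSup₂ (f := fun (X : Finset α) (_ : Shatters C (X : Set α)) => (X.card : ℕ∞)) X h

theorem vcDim_ellipsoids_lower (d : ℕ) :
    ((d ^ 2 + 3 * d) / 2 : ℕ) ≤ vcDim {E : Set (Fin d → ℝ) | IsEllipsoid E} ∧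
    ∃ S : Finset (Fin d → ℝ), S.card = (d ^ 2 + 3 * d) / 2 ∧
      (∀ x ∈ S, ∑ i, x i ^ 2 = 1) ∧
      Shatters {E : Set (Fin d → ℝ) | IsEllipsoid E} (S : Set (Fin d → ℝ)) := by
  classical
  let S := Finset.univ.image (spherePoint (d := d))
  have hcard : S.card = (d ^ 2 + 3 * d) / 2 := by
    rw [Finset.card_image_of_injective _ spherePoint_injective, Finset.card_univ,
      card_sum_sum_subtype_not_isDiag]
  have hshatters : Shatters {E : Set (Fin d → ℝ) | IsEllipsoid E} (S : Set (Fin d → ℝ)) := by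
    simpa [S] using shatters_ellipsoids_range_spherePoint (d := d)
  refine ⟨hcard ▸ le_vcDim_of_shatters hshatters, S, hcard, ?_, hshatters⟩
  simp only [S, Finset.mem_image]
  rintro _ ⟨a, -, rfl⟩
  exact sum_sq_spherePoint a
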